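/- arXiv:2310.17608 — 4 statements merged into one kernel-verified Lean document; each statement's English description precedes it below -/
import Mathlib

section
/- Let n ≥ 3, V = Symⁿℂ², W = Symⁿℂ² ⊕ Sym^{n−2}ℂ², v = e₁e₂^{n−1} ∈ V, w = e₁ⁿ + ẽ₂^{n−2} ∈ W. For every g = [[a,b],[c,d]] ∈ SL(2,ℂ), the weight interval N(g·v) (with respect to the standard diagonal torus) is contained in N(g·w). Explicitly: if ac ≠ 0 then N(g·w) = [−n, n]; if a = 0 then N(g·w) = [−n, n−2] and N(g·v) ⊆ [−n, n−2]; if c = 0 then N(g·w) = [−n+2, n] and N(g·v) ⊆ [−n+2, n]. -/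
open MvPolynomial

/-- Weight set of a vector of `Symᵏℂ²` (homogeneous degree-`k` polynomials in
`e₁ = X 0, e₂ = X 1`): the monomial `e₁^i e₂^{k−i}` has weight `2i − k` for the
standard diagonal torus of `SL(2,ℂ)`. -/
noncomputable def wtSet5 (k : ℕ) (p : MvPolynomial (Fin 2) ℂ) : Set ℝ :=
  {x | ∃ i : ℕ, i ≤ k ∧
    MvPolynomial.coeff (Finsupp.single (0 : Fin 2) i + Finsupp.single (1 : Fin 2) (k - i)) p ≠ 0 ∧
    x = 2 * (i : ℝ) - (k : ℝ)}

/-- Weight interval: convex hull of the weight set. -/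
noncomputable def wtN5 (k : ℕ) (p : MvPolynomial (Fin 2) ℂ) : Set ℝ :=
  convexHull ℝ (wtSet5 k p)

/-- Substitution action of `g = [[a,b],[c,d]] ∈ SL(2,ℂ)`: `e₁ ↦ a e₁ + c e₂`,
`e₂ ↦ b e₁ + d e₂`. -/
noncomputable def act5 (g : Matrix.SpecialLinearGroup (Fin 2) ℂ) :
    MvPolynomial (Fin 2) ℂ → MvPolynomial (Fin 2) ℂ :=
  MvPolynomial.aeval (fun i : Fin 2 =>
    if i = 0 then
      C ((g : Matrix (Fin 2) (Fin 2) ℂ) 0 0) * X 0 + C ((g : Matrix (Fin 2) (Fin 2) ℂ) 1 0) * X 1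
    else
      C ((g : Matrix (Fin 2) (Fin 2) ℂ) 0 1) * X 0 + C ((g : Matrix (Fin 2) (Fin 2) ℂ) 1 1) * X 1)

lemma expand5 (a c : ℂ) (n : ℕ) :
    ((C a * X 0 + C c * X 1 : MvPolynomial (Fin 2) ℂ)) ^ n =
      ∑ k ∈ Finset.range (n + 1),
        monomial (Finsupp.single (0:Fin 2) k + Finsupp.single (1:Fin 2) (n - k))
          ((n.choose k : ℂ) * a ^ k * c ^ (n - k)) := by
  rw [add_pow]
  refine Finset.sum_congr rfl fun k hk => ?_
  rw [mul_pow, mul_pow, ← C_pow, ← C_pow, X_pow_eq_monomial, X_pow_eq_monomial,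
    C_mul_monomial, C_mul_monomial, monomial_mul]
  rw [show ((n.choose k : ℕ) : MvPolynomial (Fin 2) ℂ) = C ((n.choose k : ℕ) : ℂ) by simp]
  rw [mul_comm _ (C _), C_mul_monomial]
  ring_nf

lemma coeff5 (a c : ℂ) (n i : ℕ) (hi : i ≤ n) :
    coeff (Finsupp.single (0:Fin 2) i + Finsupp.single (1:Fin 2) (n - i))
      ((C a * X 0 + C c * X 1 : MvPolynomial (Fin 2) ℂ) ^ n)
      = (n.choose i : ℂ) * a ^ i * c ^ (n - i) := by
  rw [expand5, coeff_sum]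
  rw [Finset.sum_eq_single i]
  · rw [coeff_monomial, if_pos rfl]
  · intro k hk hki
    rw [coeff_monomial, if_neg]
    intro h
    exact hki (by simpa [Finsupp.single_apply] using DFunLike.congr_fun h 0)
  · intro h
    exact absurd (Finset.mem_range.mpr (Nat.lt_succ_of_le hi)) h

lemma wtSet5_subset_Icc (k : ℕ) (p : MvPolynomial (Fin 2) ℂ) :
    wtSet5 k p ⊆ Set.Icc (-(k:ℝ)) k := by
  rintro x ⟨i, hik, -, rfl⟩
  have h1 : (i:ℝ) ≤ k := Nat.cast_le.mpr hik
  have h2 : (0:ℝ) ≤ i := Nat.cast_nonneg i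
  constructor <;> linarith

lemma hull_eq_Icc {s : Set ℝ} {A B : ℝ} (hAB : A ≤ B) (hs : s ⊆ Set.Icc A B)
    (hA : A ∈ s) (hB : B ∈ s) : convexHull ℝ s = Set.Icc A B := by
  refine subset_antisymm (convexHull_min hs (convex_Icc A B)) ?_
  rw [← segment_eq_Icc hAB, ← convexHull_pair]
  exact convexHull_mono (Set.insert_subset_iff.mpr ⟨hA, Set.singleton_subset_iff.mpr hB⟩)

lemma coeff_topv (c : ℂ) (q : MvPolynomial (Fin 2) ℂ) (n : ℕ) :
    coeff (Finsupp.single (0:Fin 2) n + Finsupp.single (1:Fin 2) 0) (C c * X 1 * q) = 0 := by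
  rw [show (C c * X 1 * q : MvPolynomial (Fin 2) ℂ) = C c * (q * X 1) by ring,
    coeff_C_mul, coeff_mul_X']
  simp [Finsupp.single_apply]

lemma coeff_botv (a : ℂ) (q : MvPolynomial (Fin 2) ℂ) (n : ℕ) :
    coeff (Finsupp.single (0:Fin 2) 0 + Finsupp.single (1:Fin 2) n) (C a * X 0 * q) = 0 := by
  rw [show (C a * X 0 * q : MvPolynomial (Fin 2) ℂ) = C a * (q * X 0) by ring,
    coeff_C_mul, coeff_mul_X']
  simp [Finsupp.single_apply]



/-- For `n ≥ 3`, `v = e₁e₂^{n−1} ∈ V = Symⁿℂ²` and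
`w = e₁ⁿ + ẽ₂^{n−2} ∈ W = Symⁿℂ² ⊕ Sym^{n−2}ℂ²`, for every `g ∈ SL(2,ℂ)` the
weight interval `N(g·v)` is contained in `N(g·w)`; moreover if `ac ≠ 0` then
`N(g·w) = [−n, n]`, if `a = 0` then `N(g·w) = [−n, n−2] ⊇ N(g·v)`, and if `c = 0`
then `N(g·w) = [−n+2, n] ⊇ N(g·v)`. -/
theorem stmt5 (n : ℕ) (hn : 3 ≤ n) (g : Matrix.SpecialLinearGroup (Fin 2) ℂ) :
    (wtN5 n (act5 g ((X 0 : MvPolynomial (Fin 2) ℂ) * X 1 ^ (n - 1))) ⊆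
      convexHull ℝ (wtSet5 n (act5 g ((X 0 : MvPolynomial (Fin 2) ℂ) ^ n)) ∪
        wtSet5 (n - 2) (act5 g ((X 1 : MvPolynomial (Fin 2) ℂ) ^ (n - 2))))) ∧
    ((g : Matrix (Fin 2) (Fin 2) ℂ) 0 0 * (g : Matrix (Fin 2) (Fin 2) ℂ) 1 0 ≠ 0 →
      convexHull ℝ (wtSet5 n (act5 g ((X 0 : MvPolynomial (Fin 2) ℂ) ^ n)) ∪
        wtSet5 (n - 2) (act5 g ((X 1 : MvPolynomial (Fin 2) ℂ) ^ (n - 2)))) =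
        Set.Icc (-(n : ℝ)) (n : ℝ)) ∧
    ((g : Matrix (Fin 2) (Fin 2) ℂ) 0 0 = 0 →
      convexHull ℝ (wtSet5 n (act5 g ((X 0 : MvPolynomial (Fin 2) ℂ) ^ n)) ∪
        wtSet5 (n - 2) (act5 g ((X 1 : MvPolynomial (Fin 2) ℂ) ^ (n - 2)))) =
        Set.Icc (-(n : ℝ)) ((n : ℝ) - 2) ∧
      wtN5 n (act5 g ((X 0 : MvPolynomial (Fin 2) ℂ) * X 1 ^ (n - 1))) ⊆
        Set.Icc (-(n : ℝ)) ((n : ℝ) - 2)) ∧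
    ((g : Matrix (Fin 2) (Fin 2) ℂ) 1 0 = 0 →
      convexHull ℝ (wtSet5 n (act5 g ((X 0 : MvPolynomial (Fin 2) ℂ) ^ n)) ∪
        wtSet5 (n - 2) (act5 g ((X 1 : MvPolynomial (Fin 2) ℂ) ^ (n - 2)))) =
        Set.Icc (-(n : ℝ) + 2) (n : ℝ) ∧
      wtN5 n (act5 g ((X 0 : MvPolynomial (Fin 2) ℂ) * X 1 ^ (n - 1))) ⊆
        Set.Icc (-(n : ℝ) + 2) (n : ℝ)) := by
  have hdet : (g : Matrix (Fin 2) (Fin 2) ℂ) 0 0 * (g : Matrix (Fin 2) (Fin 2) ℂ) 1 1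
      - (g : Matrix (Fin 2) (Fin 2) ℂ) 0 1 * (g : Matrix (Fin 2) (Fin 2) ℂ) 1 0 = 1 := by
    have h := g.property
    rwa [Matrix.det_fin_two] at h
  have hw : act5 g ((X 0 : MvPolynomial (Fin 2) ℂ) ^ n)
      = (C ((g : Matrix (Fin 2) (Fin 2) ℂ) 0 0) * X 0
         + C ((g : Matrix (Fin 2) (Fin 2) ℂ) 1 0) * X 1) ^ n := by
    simp [act5]
  have hw2 : act5 g ((X 1 : MvPolynomial (Fin 2) ℂ) ^ (n - 2))
      = (C ((g : Matrix (Fin 2) (Fin 2) ℂ) 0 1) * X 0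
         + C ((g : Matrix (Fin 2) (Fin 2) ℂ) 1 1) * X 1) ^ (n - 2) := by
    simp [act5]
  have hv : act5 g ((X 0 : MvPolynomial (Fin 2) ℂ) * X 1 ^ (n - 1))
      = (C ((g : Matrix (Fin 2) (Fin 2) ℂ) 0 0) * X 0
         + C ((g : Matrix (Fin 2) (Fin 2) ℂ) 1 0) * X 1) *
        (C ((g : Matrix (Fin 2) (Fin 2) ℂ) 0 1) * X 0
         + C ((g : Matrix (Fin 2) (Fin 2) ℂ) 1 1) * X 1) ^ (n - 1) := by
    simp [act5]
  set a := (g : Matrix (Fin 2) (Fin 2) ℂ) 0 0 with ha_def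
  set b := (g : Matrix (Fin 2) (Fin 2) ℂ) 0 1 with hb_def
  set c := (g : Matrix (Fin 2) (Fin 2) ℂ) 1 0 with hc_def
  set d := (g : Matrix (Fin 2) (Fin 2) ℂ) 1 1 with hd_def
  have hn3 : (3:ℝ) ≤ (n:ℝ) := by exact_mod_cast hn
  have hc2 : ((n - 2 : ℕ) : ℝ) = (n : ℝ) - 2 := by
    have h2n : (2:ℕ) ≤ n := by omega
    push_cast [h2n]
    ring
  -- Part 2 : a*c ≠ 0
  have h2 : a * c ≠ 0 →
      convexHull ℝ (wtSet5 n (act5 g ((X 0 : MvPolynomial (Fin 2) ℂ) ^ n)) ∪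
        wtSet5 (n - 2) (act5 g ((X 1 : MvPolynomial (Fin 2) ℂ) ^ (n - 2)))) =
        Set.Icc (-(n : ℝ)) (n : ℝ) := by
    intro hac
    obtain ⟨ha, hc⟩ := mul_ne_zero_iff.mp hac
    refine hull_eq_Icc (by linarith) ?_ ?_ ?_
    · refine Set.union_subset (wtSet5_subset_Icc n _) ((wtSet5_subset_Icc _ _).trans ?_)
      refine Set.Icc_subset_Icc ?_ ?_ <;> rw [hc2] <;> linarith
    · refine Set.mem_union_left _ ⟨0, n.zero_le, ?_, by push_cast; ring⟩
      rw [hw, coeff5 _ _ _ _ n.zero_le]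
      simpa using pow_ne_zero n hc
    · refine Set.mem_union_left _ ⟨n, le_refl n, ?_, by push_cast; ring⟩
      rw [hw, coeff5 _ _ _ _ (le_refl n)]
      simpa using pow_ne_zero n ha
  -- Part 3 : a = 0
  have h3 : a = 0 →
      (convexHull ℝ (wtSet5 n (act5 g ((X 0 : MvPolynomial (Fin 2) ℂ) ^ n)) ∪
        wtSet5 (n - 2) (act5 g ((X 1 : MvPolynomial (Fin 2) ℂ) ^ (n - 2)))) =
        Set.Icc (-(n : ℝ)) ((n : ℝ) - 2) ∧
      wtN5 n (act5 g ((X 0 : MvPolynomial (Fin 2) ℂ) * X 1 ^ (n - 1))) ⊆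
        Set.Icc (-(n : ℝ)) ((n : ℝ) - 2)) := by
    intro ha0
    have hbc : b * c = -1 := by rw [ha0] at hdet; linear_combination -hdet
    have hb : b ≠ 0 := by intro h; rw [h] at hbc; simp at hbc
    have hc : c ≠ 0 := by intro h; rw [h] at hbc; simp at hbc
    constructor
    · refine hull_eq_Icc (by linarith) ?_ ?_ ?_
      · refine Set.union_subset ?_ ((wtSet5_subset_Icc _ _).trans ?_)
        · rintro x ⟨i, hi, hco, rfl⟩
          rw [hw, coeff5 _ _ _ _ hi, ha0] at hco
          have hi0 : i = 0 := by
            by_contra h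
            simp [zero_pow h] at hco
          subst hi0
          constructor <;> push_cast <;> linarith
        · refine Set.Icc_subset_Icc ?_ ?_ <;> rw [hc2] <;> linarith
      · refine Set.mem_union_left _ ⟨0, n.zero_le, ?_, by push_cast; ring⟩
        rw [hw, coeff5 _ _ _ _ n.zero_le]
        simpa using pow_ne_zero n hc
      · refine Set.mem_union_right _ ⟨n - 2, le_refl _, ?_, by rw [hc2]; ring⟩
        rw [hw2, coeff5 _ _ _ _ (le_refl _)]
        simpa using pow_ne_zero (n - 2) hb
    · refine convexHull_min ?_ (convex_Icc _ _)
      rintro x ⟨i, hi, hco, rfl⟩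
      have hin : i ≠ n := by
        intro h
        subst h
        rw [hv, ha0, map_zero, zero_mul, zero_add, Nat.sub_self] at hco
        exact hco (coeff_topv _ _ _)
      have hile : (i:ℝ) ≤ (n:ℝ) - 1 := by
        have : i + 1 ≤ n := by omega
        have := Nat.cast_le (α := ℝ).mpr this
        push_cast at this
        linarith
      have h0 : (0:ℝ) ≤ i := Nat.cast_nonneg i
      constructor <;> linarith
  -- Part 4 : c = 0
  have h4 : c = 0 →
      (convexHull ℝ (wtSet5 n (act5 g ((X 0 : MvPolynomial (Fin 2) ℂ) ^ n)) ∪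
        wtSet5 (n - 2) (act5 g ((X 1 : MvPolynomial (Fin 2) ℂ) ^ (n - 2)))) =
        Set.Icc (-(n : ℝ) + 2) (n : ℝ) ∧
      wtN5 n (act5 g ((X 0 : MvPolynomial (Fin 2) ℂ) * X 1 ^ (n - 1))) ⊆
        Set.Icc (-(n : ℝ) + 2) (n : ℝ)) := by
    intro hc0
    have had : a * d = 1 := by rw [hc0] at hdet; linear_combination hdet
    have ha : a ≠ 0 := by intro h; rw [h] at had; simp at had
    have hd : d ≠ 0 := by intro h; rw [h] at had; simp at had
    constructor
    · refine hull_eq_Icc (by linarith) ?_ ?_ ?_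
      · refine Set.union_subset ?_ ((wtSet5_subset_Icc _ _).trans ?_)
        · rintro x ⟨i, hi, hco, rfl⟩
          rw [hw, coeff5 _ _ _ _ hi, hc0] at hco
          have hin : i = n := by
            by_contra h
            have : n - i ≠ 0 := by omega
            simp [zero_pow this] at hco
          subst hin
          constructor <;> push_cast <;> linarith
        · refine Set.Icc_subset_Icc ?_ ?_ <;> rw [hc2] <;> linarith
      · refine Set.mem_union_right _ ⟨0, Nat.zero_le _, ?_, by rw [hc2]; push_cast; ring⟩
        rw [hw2, coeff5 _ _ _ _ (Nat.zero_le _)]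
        simpa using pow_ne_zero (n - 2) hd
      · refine Set.mem_union_left _ ⟨n, le_refl n, ?_, by push_cast; ring⟩
        rw [hw, coeff5 _ _ _ _ (le_refl n)]
        simpa using pow_ne_zero n ha
    · refine convexHull_min ?_ (convex_Icc _ _)
      rintro x ⟨i, hi, hco, rfl⟩
      have hin : i ≠ 0 := by
        intro h
        subst h
        rw [hv, hc0, map_zero, zero_mul, add_zero, Nat.sub_zero] at hco
        exact hco (coeff_botv _ _ _)
      have hige : (1:ℝ) ≤ (i:ℝ) := by
        have : 1 ≤ i := by omega
        exact_mod_cast this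
      have hile : (i:ℝ) ≤ (n:ℝ) := Nat.cast_le.mpr hi
      constructor <;> linarith
  refine ⟨?_, h2, h3, h4⟩
  by_cases ha0 : a = 0
  · obtain ⟨heq, hsub⟩ := h3 ha0
    rw [heq]
    exact hsub
  · by_cases hc0 : c = 0
    · obtain ⟨heq, hsub⟩ := h4 hc0
      rw [heq]
      exact hsub
    · rw [h2 (mul_ne_zero ha0 hc0)]
      exact convexHull_min (wtSet5_subset_Icc n _) (convex_Icc _ _)
end

section
/- In the weight lattice of SL(3,ℂ) with L₁ + L₂ + L₃ = 0, the weight polytope of Γ_{0,k+1} (the triangle with vertices −(k+1)Lⱼ, j = 1,2,3) is contained in the weight polytope of Γ_{2k,1} (the hexagon with vertices 2kL_i − L_j for i ≠ j), and their boundaries intersect exactly at the three vertices of the triangle. -/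
private lemma combo3_mem {S : Set (ℝ × ℝ)} {u v w : ℝ × ℝ} (hu : u ∈ S) (hv : v ∈ S)
    (hw : w ∈ S) {a b c : ℝ} (ha : 0 ≤ a) (hb : 0 ≤ b) (hc : 0 ≤ c) (habc : a + b + c = 1) :
    a • u + b • v + c • w ∈ convexHull ℝ S := by
  have h := (convex_convexHull ℝ S).sum_mem (t := (Finset.univ : Finset (Fin 3)))
    (w := ![a, b, c]) (z := ![u, v, w]) ?_ ?_ ?_
  · simpa [Fin.sum_univ_three] using h
  · intro i _; fin_cases i <;> assumption
  · simp [Fin.sum_univ_three, habc]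
  · intro i _; fin_cases i <;>
      simp [subset_convexHull ℝ S hu, subset_convexHull ℝ S hv, subset_convexHull ℝ S hw]

private lemma mem_tri {S : Set (ℝ × ℝ)} {u v w : ℝ × ℝ} (hu : u ∈ S) (hv : v ∈ S) (hw : w ∈ S)
    {x y a b c D : ℝ} (hD : 0 < D) (ha : 0 ≤ a) (hb : 0 ≤ b) (hc : 0 ≤ c)
    (hsum : a + b + c = D) (hx : a * u.1 + b * v.1 + c * w.1 = D * x)
    (hy : a * u.2 + b * v.2 + c * w.2 = D * y) :
    ((x, y) : ℝ × ℝ) ∈ convexHull ℝ S := by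
  have h := combo3_mem hu hv hw (a := a / D) (b := b / D) (c := c / D)
    (div_nonneg ha hD.le) (div_nonneg hb hD.le) (div_nonneg hc hD.le)
    (by field_simp; linarith)
  have hxy : ((x, y) : ℝ × ℝ) = (a / D) • u + (b / D) • v + (c / D) • w := by
    have hu' : u = (u.1, u.2) := rfl
    have hv' : v = (v.1, v.2) := rfl
    have hw' : w = (w.1, w.2) := rfl
    rw [hu', hv', hw']
    simp only [Prod.smul_mk, smul_eq_mul, Prod.mk_add_mk, Prod.mk.injEq]
    constructor <;> field_simp <;> linarith
  rw [hxy]; exact h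

private lemma isOpen_hs (a b c : ℝ) : IsOpen {p : ℝ × ℝ | a * p.1 + b * p.2 < c} :=
  isOpen_lt (by fun_prop) continuous_const

private lemma convex_hs (a b c : ℝ) : Convex ℝ {p : ℝ × ℝ | a * p.1 + b * p.2 ≤ c} := by
  have : IsLinearMap ℝ (fun p : ℝ × ℝ => a * p.1 + b * p.2) := by
    constructor
    · intro p q; simp; ring
    · intro t p; simp [smul_eq_mul]; ring
  exact convex_halfSpace_le this c

private lemma not_mem_interior_of_eq {s : Set (ℝ × ℝ)} {a b c : ℝ}
    (hs : s ⊆ {p : ℝ × ℝ | a * p.1 + b * p.2 ≤ c}) {x : ℝ × ℝ}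
    (hx : a * x.1 + b * x.2 = c) (hab : 0 < a ^ 2 + b ^ 2) : x ∉ interior s := by
  intro h
  rcases Metric.isOpen_iff.1 isOpen_interior x h with ⟨ε, hε, hball⟩
  set δ := ε / (|a| + |b| + 1) with hδ
  have hδpos : 0 < δ := by positivity
  have hmem : (x.1 + δ * a, x.2 + δ * b) ∈ Metric.ball x ε := by
    rw [Metric.mem_ball, Prod.dist_eq]
    have h1 : dist (x.1 + δ * a) x.1 = δ * |a| := by
      rw [Real.dist_eq]; simp [abs_mul, abs_of_pos hδpos]
    have h2 : dist (x.2 + δ * b) x.2 = δ * |b| := by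
      rw [Real.dist_eq]; simp [abs_mul, abs_of_pos hδpos]
    rw [h1, h2]
    have ha' : δ * |a| < ε := by
      rw [hδ, div_mul_eq_mul_div, div_lt_iff₀ (by positivity)]
      have := abs_nonneg a; have := abs_nonneg b
      nlinarith
    have hb' : δ * |b| < ε := by
      rw [hδ, div_mul_eq_mul_div, div_lt_iff₀ (by positivity)]
      have := abs_nonneg a; have := abs_nonneg b
      nlinarith
    exact max_lt ha' hb'
  have := hs (interior_subset (hball hmem))
  simp only [Set.mem_setOf_eq] at this
  nlinarith

private lemma hexhull {m x y : ℝ} (hm : 1 ≤ m)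
    (h1 : 2*x - y ≤ 4*m+1) (h2 : x + y ≤ 2*m+2) (h3 : 2*y - x ≤ 4*m+1)
    (h4 : y - 2*x ≤ 2*m+2) (h5 : -x - y ≤ 4*m+1) (h6 : x - 2*y ≤ 2*m+2) :
    ((x, y) : ℝ × ℝ) ∈ convexHull ℝ
      ({(2*m, -1), (2*m+1, 1), (1, 2*m+1), (-1, 2*m), (-2*m-1, -2*m), (-2*m, -2*m-1)} :
        Set (ℝ × ℝ)) := by
  have hm0 : (0:ℝ) < m := by linarith
  have mB1 : ((2*m, -1) : ℝ × ℝ) ∈ ({(2*m, -1), (2*m+1, 1), (1, 2*m+1), (-1, 2*m),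
      (-2*m-1, -2*m), (-2*m, -2*m-1)} : Set (ℝ × ℝ)) := by simp
  have mB2 : ((2*m+1, 1) : ℝ × ℝ) ∈ ({(2*m, -1), (2*m+1, 1), (1, 2*m+1), (-1, 2*m),
      (-2*m-1, -2*m), (-2*m, -2*m-1)} : Set (ℝ × ℝ)) := by simp
  have mB3 : ((1, 2*m+1) : ℝ × ℝ) ∈ ({(2*m, -1), (2*m+1, 1), (1, 2*m+1), (-1, 2*m),
      (-2*m-1, -2*m), (-2*m, -2*m-1)} : Set (ℝ × ℝ)) := by simp
  have mB4 : ((-1, 2*m) : ℝ × ℝ) ∈ ({(2*m, -1), (2*m+1, 1), (1, 2*m+1), (-1, 2*m),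
      (-2*m-1, -2*m), (-2*m, -2*m-1)} : Set (ℝ × ℝ)) := by simp
  have mB5 : ((-2*m-1, -2*m) : ℝ × ℝ) ∈ ({(2*m, -1), (2*m+1, 1), (1, 2*m+1), (-1, 2*m),
      (-2*m-1, -2*m), (-2*m, -2*m-1)} : Set (ℝ × ℝ)) := by simp
  have mB6 : ((-2*m, -2*m-1) : ℝ × ℝ) ∈ ({(2*m, -1), (2*m+1, 1), (1, 2*m+1), (-1, 2*m),
      (-2*m-1, -2*m), (-2*m, -2*m-1)} : Set (ℝ × ℝ)) := by simp
  rcases le_total ((1-2*m)*(y+1) - (2*m+2)*(x-2*m)) 0 with hf3 | hf3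
  · exact mem_tri mB1 mB2 mB3 (D := 6*m)
      (a := 2*m*(2*m+2-x-y)) (b := -((1-2*m)*(y+1) - (2*m+2)*(x-2*m))) (c := 4*m+1-(2*x-y))
      (by linarith) (mul_nonneg (by linarith) (by linarith)) (by linarith) (by linarith)
      (by ring) (by norm_num; ring) (by norm_num; ring)
  · rcases le_total ((-1-2*m)*(y+1) - (2*m+1)*(x-2*m)) 0 with hf4 | hf4
    · exact mem_tri mB1 mB3 mB4 (D := 6*m+3)
        (a := 4*m+1-(2*y-x)) (b := -((-1-2*m)*(y+1) - (2*m+1)*(x-2*m)))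
        (c := (1-2*m)*(y+1) - (2*m+2)*(x-2*m))
        (by linarith) (by linarith) (by linarith) (by linarith)
        (by ring) (by norm_num; ring) (by norm_num; ring)
    · rcases le_total ((-4*m-1)*(y+1) + (2*m-1)*(x-2*m)) 0 with hf5 | hf5
      · exact mem_tri mB1 mB4 mB5 (D := 12*m^2+6*m)
          (a := 2*m*(2*m+2-(y-2*x))) (b := -((-4*m-1)*(y+1) + (2*m-1)*(x-2*m)))
          (c := (-1-2*m)*(y+1) - (2*m+1)*(x-2*m))
          (by nlinarith) (mul_nonneg (by linarith) (by linarith)) (by linarith) (by linarith)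
          (by ring) (by norm_num; ring) (by norm_num; ring)
      · exact mem_tri mB1 mB5 mB6 (D := 6*m)
          (a := 4*m+1+x+y) (b := 2*m*(2*m+2-(x-2*y)))
          (c := (-4*m-1)*(y+1) + (2*m-1)*(x-2*m))
          (by linarith) (by linarith) (mul_nonneg (by linarith) (by linarith)) (by linarith)
          (by ring) (by norm_num; ring) (by norm_num; ring)

/-- Weights `L₁ = (1,0)`, `L₂ = (0,1)`, `L₃ = (−1,−1)` of the standard representation of
`SL(3,ℂ)` in `Lie(T₀)* ≅ ℝ²` (so `L₁ + L₂ + L₃ = 0`). -/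
noncomputable def L8 : Fin 3 → ℝ × ℝ := ![(1, 0), (0, 1), (-1, -1)]

set_option maxHeartbeats 1000000 in
/-- The weight polytope of `Γ_{0,k+1}` (triangle with vertices `−(k+1)Lⱼ`) is contained in
the weight polytope of `Γ_{2k,1}` (hexagon with vertices `2kL_i − L_j`, `i ≠ j`), and their
boundaries intersect exactly at the three vertices of the triangle. -/
theorem stmt8 (k : ℕ) (hk : 1 ≤ k) :
    convexHull ℝ {x : ℝ × ℝ | ∃ j : Fin 3, x = -((k : ℝ) + 1) • L8 j} ⊆
      convexHull ℝ {x : ℝ × ℝ | ∃ i j : Fin 3, i ≠ j ∧ x = (2 * (k : ℝ)) • L8 i - L8 j} ∧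
    frontier (convexHull ℝ {x : ℝ × ℝ | ∃ j : Fin 3, x = -((k : ℝ) + 1) • L8 j}) ∩
      frontier (convexHull ℝ {x : ℝ × ℝ | ∃ i j : Fin 3, i ≠ j ∧ x = (2 * (k : ℝ)) • L8 i - L8 j}) =
      {x : ℝ × ℝ | ∃ j : Fin 3, x = -((k : ℝ) + 1) • L8 j} := by
  have hTS : {x : ℝ × ℝ | ∃ j : Fin 3, x = -((k : ℝ) + 1) • L8 j}
      = ({(-((k:ℝ)+1), 0), (0, -((k:ℝ)+1)), ((k:ℝ)+1, (k:ℝ)+1)} : Set (ℝ × ℝ)) := by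
    ext x
    simp only [Set.mem_setOf_eq, Set.mem_insert_iff, Set.mem_singleton_iff]
    constructor
    · rintro ⟨j, rfl⟩
      fin_cases j
      · left; simp [L8, Prod.ext_iff]
      · right; left; simp [L8, Prod.ext_iff]
      · right; right; simp [L8, Prod.ext_iff]
    · rintro (rfl | rfl | rfl)
      exacts [⟨0, by simp [L8, Prod.ext_iff]⟩, ⟨1, by simp [L8, Prod.ext_iff]⟩,
        ⟨2, by simp [L8, Prod.ext_iff]⟩]
  have hHS : {x : ℝ × ℝ | ∃ i j : Fin 3, i ≠ j ∧ x = (2 * (k : ℝ)) • L8 i - L8 j}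
      = ({(2*(k:ℝ), -1), (2*(k:ℝ)+1, 1), (1, 2*(k:ℝ)+1), (-1, 2*(k:ℝ)),
          (-2*(k:ℝ)-1, -2*(k:ℝ)), (-2*(k:ℝ), -2*(k:ℝ)-1)} : Set (ℝ × ℝ)) := by
    ext x
    simp only [Set.mem_setOf_eq, Set.mem_insert_iff, Set.mem_singleton_iff]
    constructor
    · rintro ⟨i, j, hij, rfl⟩
      fin_cases i <;> fin_cases j <;> simp_all [L8, Prod.ext_iff]
    · rintro (rfl | rfl | rfl | rfl | rfl | rfl)
      exacts [⟨0, 1, by decide, by simp [L8, Prod.ext_iff]⟩,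
        ⟨0, 2, by decide, by simp [L8, Prod.ext_iff]⟩,
        ⟨1, 2, by decide, by simp [L8, Prod.ext_iff]⟩,
        ⟨1, 0, by decide, by simp [L8, Prod.ext_iff]⟩,
        ⟨2, 0, by decide, by simp [L8, Prod.ext_iff]⟩,
        ⟨2, 1, by decide, by simp [L8, Prod.ext_iff]⟩]
  rw [hTS, hHS]
  set m : ℝ := (k : ℝ) with hmdef
  have hm : (1:ℝ) ≤ m := by rw [hmdef]; exact_mod_cast hk
  set TV : Set (ℝ × ℝ) := {(-(m+1), 0), (0, -(m+1)), (m+1, m+1)} with hTV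
  set HV : Set (ℝ × ℝ) := {(2*m, -1), (2*m+1, 1), (1, 2*m+1), (-1, 2*m),
      (-2*m-1, -2*m), (-2*m, -2*m-1)} with hHV
  -- part 1 : containment of hulls
  have hsub : convexHull ℝ TV ⊆ convexHull ℝ HV := by
    apply convexHull_min _ (convex_convexHull ℝ _)
    intro x hx
    rw [hTV] at hx
    simp only [Set.mem_insert_iff, Set.mem_singleton_iff] at hx
    rcases hx with rfl | rfl | rfl
    · exact mem_tri (D := (2:ℝ)) (a := (1:ℝ)) (b := (1:ℝ)) (c := (0:ℝ))
        (by rw [hHV]; simp) (by rw [hHV]; simp) (by rw [hHV]; simp)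
        (u := ((-1, 2*m) : ℝ × ℝ)) (v := ((-2*m-1, -2*m) : ℝ × ℝ)) (w := ((-2*m, -2*m-1) : ℝ × ℝ))
        two_pos zero_le_one zero_le_one le_rfl (by norm_num) (by norm_num; ring) (by norm_num)
    · exact mem_tri (D := (2:ℝ)) (a := (1:ℝ)) (b := (1:ℝ)) (c := (0:ℝ))
        (by rw [hHV]; simp) (by rw [hHV]; simp) (by rw [hHV]; simp)
        (u := ((2*m, -1) : ℝ × ℝ)) (v := ((-2*m, -2*m-1) : ℝ × ℝ)) (w := ((-1, 2*m) : ℝ × ℝ))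
        two_pos zero_le_one zero_le_one le_rfl (by norm_num) (by norm_num) (by norm_num; ring)
    · exact mem_tri (D := (2:ℝ)) (a := (1:ℝ)) (b := (1:ℝ)) (c := (0:ℝ))
        (by rw [hHV]; simp) (by rw [hHV]; simp) (by rw [hHV]; simp)
        (u := ((2*m+1, 1) : ℝ × ℝ)) (v := ((1, 2*m+1) : ℝ × ℝ)) (w := ((-1, 2*m) : ℝ × ℝ))
        two_pos zero_le_one zero_le_one le_rfl (by norm_num) (by norm_num; ring) (by norm_num; ring)
  -- halfspace bounds
  have hTsub1 : convexHull ℝ TV ⊆ {p : ℝ × ℝ | (-1) * p.1 + (-1) * p.2 ≤ m+1} := by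
    apply convexHull_min _ (convex_hs _ _ _)
    intro x hx
    rw [hTV] at hx
    simp only [Set.mem_insert_iff, Set.mem_singleton_iff] at hx
    rcases hx with rfl | rfl | rfl <;> simp <;> linarith
  have hTsub2 : convexHull ℝ TV ⊆ {p : ℝ × ℝ | 2 * p.1 + (-1) * p.2 ≤ m+1} := by
    apply convexHull_min _ (convex_hs _ _ _)
    intro x hx
    rw [hTV] at hx
    simp only [Set.mem_insert_iff, Set.mem_singleton_iff] at hx
    rcases hx with rfl | rfl | rfl <;> simp <;> linarith
  have hTsub3 : convexHull ℝ TV ⊆ {p : ℝ × ℝ | (-1) * p.1 + 2 * p.2 ≤ m+1} := by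
    apply convexHull_min _ (convex_hs _ _ _)
    intro x hx
    rw [hTV] at hx
    simp only [Set.mem_insert_iff, Set.mem_singleton_iff] at hx
    rcases hx with rfl | rfl | rfl <;> simp <;> linarith
  have hHsub1 : convexHull ℝ HV ⊆ {p : ℝ × ℝ | 1 * p.1 + 1 * p.2 ≤ 2*m+2} := by
    apply convexHull_min _ (convex_hs _ _ _)
    intro x hx
    rw [hHV] at hx
    simp only [Set.mem_insert_iff, Set.mem_singleton_iff] at hx
    rcases hx with rfl | rfl | rfl | rfl | rfl | rfl <;> simp <;> linarith
  have hHsub2 : convexHull ℝ HV ⊆ {p : ℝ × ℝ | (-2) * p.1 + 1 * p.2 ≤ 2*m+2} := by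
    apply convexHull_min _ (convex_hs _ _ _)
    intro x hx
    rw [hHV] at hx
    simp only [Set.mem_insert_iff, Set.mem_singleton_iff] at hx
    rcases hx with rfl | rfl | rfl | rfl | rfl | rfl <;> simp <;> linarith
  have hHsub3 : convexHull ℝ HV ⊆ {p : ℝ × ℝ | 1 * p.1 + (-2) * p.2 ≤ 2*m+2} := by
    apply convexHull_min _ (convex_hs _ _ _)
    intro x hx
    rw [hHV] at hx
    simp only [Set.mem_insert_iff, Set.mem_singleton_iff] at hx
    rcases hx with rfl | rfl | rfl | rfl | rfl | rfl <;> simp <;> linarith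
  -- key interiority lemma
  have hkey : ∀ p : ℝ × ℝ, p ∈ convexHull ℝ TV → p ∉ TV → p ∈ interior (convexHull ℝ HV) := by
    rintro ⟨x, y⟩ hp hv
    rw [hTV] at hv
    simp only [Set.mem_insert_iff, Set.mem_singleton_iff, not_or, Prod.mk.injEq, not_and] at hv
    obtain ⟨hv1, hv2, hv3⟩ := hv
    have e1 : (-1) * x + (-1) * y ≤ m+1 := hTsub1 hp
    have e2 : 2 * x + (-1) * y ≤ m+1 := hTsub2 hp
    have e3 : (-1) * x + 2 * y ≤ m+1 := hTsub3 hp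
    have s2 : x + y < 2*m+2 := by
      rcases lt_or_eq_of_le (show x + y ≤ 2*m+2 by linarith) with h | h
      · exact h
      · exfalso
        have hx : x = m+1 := by linarith
        exact hv3 hx (by linarith)
    have s4 : y - 2*x < 2*m+2 := by
      rcases lt_or_eq_of_le (show y - 2*x ≤ 2*m+2 by linarith) with h | h
      · exact h
      · exfalso
        have hx : x = -(m+1) := by linarith
        exact hv1 hx (by linarith)
    have s6 : x - 2*y < 2*m+2 := by
      rcases lt_or_eq_of_le (show x - 2*y ≤ 2*m+2 by linarith) with h | h
      · exact h
      · exfalso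
        have hx : x = 0 := by linarith
        exact hv2 hx (by linarith)
    have hOopen : IsOpen ({p : ℝ × ℝ | 2*p.1 + (-1)*p.2 < 4*m+1} ∩
        ({p : ℝ × ℝ | 1*p.1 + 1*p.2 < 2*m+2} ∩ ({p : ℝ × ℝ | (-1)*p.1 + 2*p.2 < 4*m+1} ∩
        ({p : ℝ × ℝ | (-2)*p.1 + 1*p.2 < 2*m+2} ∩ ({p : ℝ × ℝ | (-1)*p.1 + (-1)*p.2 < 4*m+1} ∩
        {p : ℝ × ℝ | 1*p.1 + (-2)*p.2 < 2*m+2}))))) :=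
      (isOpen_hs _ _ _).inter ((isOpen_hs _ _ _).inter ((isOpen_hs _ _ _).inter
        ((isOpen_hs _ _ _).inter ((isOpen_hs _ _ _).inter (isOpen_hs _ _ _)))))
    have hOsub : ({p : ℝ × ℝ | 2*p.1 + (-1)*p.2 < 4*m+1} ∩
        ({p : ℝ × ℝ | 1*p.1 + 1*p.2 < 2*m+2} ∩ ({p : ℝ × ℝ | (-1)*p.1 + 2*p.2 < 4*m+1} ∩
        ({p : ℝ × ℝ | (-2)*p.1 + 1*p.2 < 2*m+2} ∩ ({p : ℝ × ℝ | (-1)*p.1 + (-1)*p.2 < 4*m+1} ∩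
        {p : ℝ × ℝ | 1*p.1 + (-2)*p.2 < 2*m+2})))))
        ⊆ convexHull ℝ HV := by
      rintro ⟨x', y'⟩ ⟨q1, q2, q3, q4, q5, q6⟩
      have q1' : 2*x' + (-1)*y' < 4*m+1 := q1
      have q2' : 1*x' + 1*y' < 2*m+2 := q2
      have q3' : (-1)*x' + 2*y' < 4*m+1 := q3
      have q4' : (-2)*x' + 1*y' < 2*m+2 := q4
      have q5' : (-1)*x' + (-1)*y' < 4*m+1 := q5
      have q6' : 1*x' + (-2)*y' < 2*m+2 := q6
      rw [hHV]
      exact hexhull hm (by linarith) (by linarith) (by linarith) (by linarith) (by linarith)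
        (by linarith)
    exact interior_maximal hOsub hOopen
      ⟨show 2*x + (-1)*y < 4*m+1 by linarith,
       show 1*x + 1*y < 2*m+2 by linarith,
       show (-1)*x + 2*y < 4*m+1 by linarith,
       show (-2)*x + 1*y < 2*m+2 by linarith,
       show (-1)*x + (-1)*y < 4*m+1 by linarith,
       show 1*x + (-2)*y < 2*m+2 by linarith⟩
  have hclosedT : IsClosed (convexHull ℝ TV) := (Set.toFinite TV).isCompact_convexHull ℝ |>.isClosed
  refine ⟨hsub, ?_⟩
  ext p
  constructor
  · rintro ⟨hpT, hpH⟩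
    have hpT' : p ∈ convexHull ℝ TV := by
      rw [← hclosedT.closure_eq]; exact frontier_subset_closure hpT
    by_contra hnv
    exact hpH.2 (hkey p hpT' hnv)
  · intro hp
    have hpT : p ∈ convexHull ℝ TV := subset_convexHull ℝ _ hp
    have hpH : p ∈ convexHull ℝ HV := hsub hpT
    have hp' := hp
    rw [hTV] at hp'
    simp only [Set.mem_insert_iff, Set.mem_singleton_iff] at hp'
    rcases hp' with rfl | rfl | rfl
    · exact ⟨⟨subset_closure hpT, not_mem_interior_of_eq hTsub1 (by norm_num) (by norm_num)⟩,
        ⟨subset_closure hpH, not_mem_interior_of_eq hHsub2 (by norm_num; ring) (by norm_num)⟩⟩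
    · exact ⟨⟨subset_closure hpT, not_mem_interior_of_eq hTsub1 (by norm_num) (by norm_num)⟩,
        ⟨subset_closure hpH, not_mem_interior_of_eq hHsub3 (by norm_num; ring) (by norm_num)⟩⟩
    · exact ⟨⟨subset_closure hpT, not_mem_interior_of_eq hTsub2 (by norm_num; ring) (by norm_num)⟩,
        ⟨subset_closure hpH, not_mem_interior_of_eq hHsub1 (by norm_num; ring) (by norm_num)⟩⟩
end

section
/- Two irreducible SL(3,ℂ)-representations Γ_{a,b} and Γ_{a′,b′} satisfy a + 2b = a′ + 2b′ if and only if their highest weights (a+b)L₁ + bL₂ and (a′+b′)L₁ + b′L₂ have equal pairing with the central direction determined by homogeneity; moreover under a + 2b = a′ + 2b′, the weight polytope of Γ_{a,b} is contained in that of Γ_{a′,b′} if and only if a ≤ a′. -/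
/-- Weights `L₁ = (1,0)`, `L₂ = (0,1)`, `L₃ = (−1,−1)` in `Lie(T₀)* ≅ ℝ²`. -/
noncomputable def L9 : Fin 3 → ℝ × ℝ := ![(1, 0), (0, 1), (-1, -1)]

/-- Weight polytope of `Γ_{a,b}`: convex hull of the `S₃`-orbit (permuting `L₁,L₂,L₃`) of
the highest weight `a L₁ − b L₃`. -/
noncomputable def wtPolytope9 (a b : ℕ) : Set (ℝ × ℝ) :=
  convexHull ℝ {x : ℝ × ℝ | ∃ σ : Equiv.Perm (Fin 3), x = (a : ℝ) • L9 (σ 0) - (b : ℝ) • L9 (σ 2)}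

lemma L9_sum (σ : Equiv.Perm (Fin 3)) : L9 (σ 0) + L9 (σ 1) + L9 (σ 2) = 0 := by
  have h := Equiv.sum_comp σ L9
  rw [Fin.sum_univ_three, Fin.sum_univ_three] at h
  rw [h]
  simp [L9, Prod.ext_iff]

lemma L9_bound (i : Fin 3) : |(L9 i).1 - (L9 i).2| ≤ 1 := by
  fin_cases i <;> simp [L9]

/-- `Γ_{a,b}` and `Γ_{a′,b′}` satisfy `a + 2b = a′ + 2b′` iff their highest weights
`(a+b)L₁ + bL₂` and `(a′+b′)L₁ + b′L₂` pair equally with the central direction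
`(x,y) ↦ x + y`; and under `a + 2b = a′ + 2b′`, the weight polytope of `Γ_{a,b}` is
contained in that of `Γ_{a′,b′}` iff `a ≤ a′`. -/
theorem stmt9 (a b a' b' : ℕ) :
    (a + 2 * b = a' + 2 * b' ↔
      (((a : ℝ) + b) • (L9 0) + (b : ℝ) • (L9 1)).1 + (((a : ℝ) + b) • (L9 0) + (b : ℝ) • (L9 1)).2 =
      (((a' : ℝ) + b') • (L9 0) + (b' : ℝ) • (L9 1)).1 + (((a' : ℝ) + b') • (L9 0) + (b' : ℝ) • (L9 1)).2) ∧
    (a + 2 * b = a' + 2 * b' →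
      (wtPolytope9 a b ⊆ wtPolytope9 a' b' ↔ a ≤ a')) := by
  constructor
  · -- first conjunct
    simp only [L9, Matrix.cons_val_zero, Matrix.cons_val_one, Matrix.head_cons,
      Prod.fst_add, Prod.snd_add, Prod.smul_mk, smul_eq_mul]
    constructor
    · intro h
      have : (a : ℝ) + 2 * b = a' + 2 * b' := by exact_mod_cast h
      push_cast
      linarith
    · intro h
      have : (a : ℝ) + 2 * b = a' + 2 * b' := by push_cast at h ⊢; linarith
      exact_mod_cast this
  · intro hhom
    have hR : (a : ℝ) + 2 * b = a' + 2 * b' := by exact_mod_cast hhom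
    constructor
    · -- subset → a ≤ a'
      intro hsub
      -- the halfspace p.1 - p.2 ≤ a' + b' contains wtPolytope9 a' b'
      have hlin : IsLinearMap ℝ (fun p : ℝ × ℝ => p.1 - p.2) := by
        constructor
        · intro x y; simp; ring
        · intro c x; simp [smul_eq_mul]; ring
      have hcvx : Convex ℝ {p : ℝ × ℝ | p.1 - p.2 ≤ (a' : ℝ) + b'} :=
        convex_halfSpace_le hlin _
      have hgen : {x : ℝ × ℝ | ∃ σ : Equiv.Perm (Fin 3),
          x = (a' : ℝ) • L9 (σ 0) - (b' : ℝ) • L9 (σ 2)} ⊆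
          {p : ℝ × ℝ | p.1 - p.2 ≤ (a' : ℝ) + b'} := by
        rintro x ⟨σ, rfl⟩
        have h0 := abs_le.mp (L9_bound (σ 0))
        have h2 := abs_le.mp (L9_bound (σ 2))
        have ha'0 : (0:ℝ) ≤ a' := Nat.cast_nonneg _
        have hb'0 : (0:ℝ) ≤ b' := Nat.cast_nonneg _
        simp only [Set.mem_setOf_eq, Prod.fst_sub, Prod.snd_sub, Prod.smul_fst, Prod.smul_snd,
          smul_eq_mul]
        nlinarith [h0.1, h0.2, h2.1, h2.2]
      have hhalf : wtPolytope9 a' b' ⊆ {p : ℝ × ℝ | p.1 - p.2 ≤ (a' : ℝ) + b'} :=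
        convexHull_min hgen hcvx
      -- the point a•L9 0 - b•L9 1 is in wtPolytope9 a b
      have hpt : ((a : ℝ) • L9 0 - (b : ℝ) • L9 1) ∈ wtPolytope9 a b := by
        apply subset_convexHull
        refine ⟨Equiv.swap 1 2, ?_⟩
        have e0 : (Equiv.swap (1 : Fin 3) 2) 0 = 0 := by decide
        have e2 : (Equiv.swap (1 : Fin 3) 2) 2 = 1 := by decide
        rw [e0, e2]
      have := hhalf (hsub hpt)
      simp only [Set.mem_setOf_eq, L9, Matrix.cons_val_zero, Matrix.cons_val_one,
        Matrix.head_cons, Prod.fst_sub, Prod.snd_sub, Prod.smul_mk, smul_eq_mul] at this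
      have : (a : ℝ) ≤ a' := by linarith
      exact_mod_cast this
    · -- a ≤ a' → subset
      intro hle
      have hRle : (a : ℝ) ≤ a' := by exact_mod_cast hle
      rcases Nat.eq_zero_or_pos a' with ha0 | hapos
      · -- a' = 0 forces a = 0, b = b'
        have ha : a = 0 := by omega
        have hb : b = b' := by omega
        subst ha0; subst ha; subst hb
        exact subset_rfl
      · apply convexHull_min _ (convex_convexHull ℝ _)
        rintro x ⟨σ, rfl⟩
        have ha' : (0:ℝ) < a' := by exact_mod_cast hapos
        set t : ℝ := (b : ℝ) - b' with ht
        have ht0 : 0 ≤ t := by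
          have : (b' : ℝ) ≤ b := by linarith
          linarith
        have haa : (a' : ℝ) = a + 2 * t := by rw [ht]; linarith
        obtain ⟨r, hra, hr0, hr1⟩ : ∃ r : ℝ, r * a' = (a : ℝ) + t ∧ 0 ≤ r ∧ r ≤ 1 := by
          refine ⟨((a : ℝ) + t) / a', by field_simp, ?_, ?_⟩
          · apply div_nonneg _ ha'.le
            have : (0:ℝ) ≤ a := Nat.cast_nonneg _
            linarith
          · rw [div_le_one ha']
            have : (0:ℝ) ≤ a := Nat.cast_nonneg _
            linarith
        -- the two big generators
        have hP : ((a' : ℝ) • L9 (σ 0) - (b' : ℝ) • L9 (σ 2)) ∈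
            {x : ℝ × ℝ | ∃ τ : Equiv.Perm (Fin 3),
              x = (a' : ℝ) • L9 (τ 0) - (b' : ℝ) • L9 (τ 2)} := ⟨σ, rfl⟩
        have hQ : ((a' : ℝ) • L9 (σ 1) - (b' : ℝ) • L9 (σ 2)) ∈
            {x : ℝ × ℝ | ∃ τ : Equiv.Perm (Fin 3),
              x = (a' : ℝ) • L9 (τ 0) - (b' : ℝ) • L9 (τ 2)} := by
          refine ⟨(Equiv.swap 0 1).trans σ, ?_⟩
          have e0 : ((Equiv.swap (0:Fin 3) 1).trans σ) 0 = σ 1 := by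
            simp [Equiv.trans_apply]
          have e2 : ((Equiv.swap (0:Fin 3) 1).trans σ) 2 = σ 2 := by
            have : (Equiv.swap (0:Fin 3) 1) 2 = 2 := by decide
            simp [Equiv.trans_apply, this]
          rw [e0, e2]
        have hmemP := subset_convexHull ℝ _ hP
        have hmemQ := subset_convexHull ℝ _ hQ
        have hcomb := (convex_convexHull ℝ {x : ℝ × ℝ | ∃ τ : Equiv.Perm (Fin 3),
              x = (a' : ℝ) • L9 (τ 0) - (b' : ℝ) • L9 (τ 2)}) hmemP hmemQ hr0
          (by linarith : (0:ℝ) ≤ 1 - r) (by ring)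
        have hsum := L9_sum σ
        have hmid : L9 (σ 1) = -L9 (σ 0) - L9 (σ 2) := by
          have := hsum
          abel_nf at this ⊢
          linear_combination (norm := abel_nf) this
        have key : (a : ℝ) • L9 (σ 0) - (b : ℝ) • L9 (σ 2) =
            r • ((a' : ℝ) • L9 (σ 0) - (b' : ℝ) • L9 (σ 2)) +
            (1 - r) • ((a' : ℝ) • L9 (σ 1) - (b' : ℝ) • L9 (σ 2)) := by
          rw [hmid]
          match_scalars
          · linarith [hra, haa, ht]
          · linarith [hra, haa, ht]
        rw [key]
        exact hcomb
end

section
/- Fix integers k ≥ 1 and distinct complex numbers x ≠ y. For 0 ≤ i, j ≤ k−1 define c̃_{ij} = ∑_{i₁=0}^{j} C(i,i₁) C(2k−i, j−i₁) x^{i₁} y^{j−i₁}. Then the k×k matrix (c̃_{ij}) is invertible. -/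
open Finset

open Polynomial

lemma aux_coeff (a : ℂ) (n m : ℕ) :
    ((1 + C a * X)^n).coeff m = n.choose m * a^m := by
  rw [add_comm, add_pow]
  simp only [one_pow, mul_one, mul_pow, ← C_pow, finset_sum_coeff, ← C_eq_natCast,
    coeff_mul_C, coeff_C_mul, coeff_X_pow, mul_ite, ite_mul, mul_one, mul_zero, zero_mul]
  rw [Finset.sum_ite_eq (range (n+1)) m]
  rcases le_or_gt m n with h | h
  · simp [Nat.lt_succ_iff.mpr h, mul_comm]
  · simp [Nat.choose_eq_zero_of_lt h, (by omega : ¬ m < n + 1)]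

lemma aux_key (k : ℕ) (x y : ℂ) (i : ℕ) (hi : i ≤ k) :
    (1 + C x * X)^i * (1 + C y * X)^(2*k - i)
      = ∑ m ∈ range (i+1),
          C ((i.choose m : ℂ) * (x-y)^m) * ((1 + C y * X)^(2*k - m) * X^m) := by
  have h1 : (1 + C x * X) = (C (x - y) * X) + (1 + C y * X) := by
    rw [C_sub]; ring
  rw [h1, add_pow, Finset.sum_mul]
  refine sum_congr rfl fun m hm => ?_
  have hm' : m ≤ i := mem_range_succ_iff.mp hm
  have hpow : (1 + C y * X) ^ (i - m) * (1 + C y * X) ^ (2*k - i)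
      = (1 + C y * X) ^ (2*k - m) := by
    rw [← pow_add]; congr 1; omega
  calc (C (x-y) * X)^m * (1 + C y * X)^(i-m) * (i.choose m : ℂ[X]) * (1 + C y * X)^(2*k-i)
      = (C (x-y))^m * (i.choose m : ℂ[X]) *
          ((1 + C y * X)^(i-m) * (1 + C y * X)^(2*k-i)) * X^m := by ring
    _ = _ := by rw [hpow, ← C_pow, ← C_eq_natCast, ← C_mul, mul_comm ((x-y)^m)]; ring

/-- For `x ≠ y`, the `k × k` matrix `c̃_{ij} = ∑_{i₁=0}^{j} C(i,i₁)C(2k−i,j−i₁) x^{i₁} y^{j−i₁}`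
(`0 ≤ i, j ≤ k−1`) is invertible. -/
theorem stmt12 (k : ℕ) (hk : 1 ≤ k) (x y : ℂ) (hxy : x ≠ y)
    (c : Matrix (Fin k) (Fin k) ℂ)
    (hc : ∀ i j : Fin k, c i j =
      ∑ i₁ ∈ Finset.range ((j : ℕ) + 1),
        (Nat.choose (i : ℕ) i₁ : ℂ) * (Nat.choose (2 * k - (i : ℕ)) ((j : ℕ) - i₁) : ℂ) *
          x ^ i₁ * y ^ ((j : ℕ) - i₁)) :
    IsUnit c := by
  set A : Matrix (Fin k) (Fin k) ℂ := fun i m => ((i : ℕ).choose (m : ℕ) : ℂ) with hA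
  set B : Matrix (Fin k) (Fin k) ℂ := fun m j =>
    if (m : ℕ) ≤ (j : ℕ) then
      (x - y)^(m : ℕ) * ((2*k - (m : ℕ)).choose ((j : ℕ) - (m : ℕ)) : ℂ) * y^((j : ℕ) - (m : ℕ))
    else 0 with hB
  have hfact : c = A * B := by
    ext i j
    -- c i j = coeff j of (1+xX)^i (1+yX)^(2k-i)
    have hcoeff : c i j =
        (((1 + C x * X)^(i:ℕ) * (1 + C y * X)^(2*k - (i:ℕ))).coeff (j:ℕ)) := by
      rw [coeff_mul, Finset.Nat.sum_antidiagonal_eq_sum_range_succ_mk, hc]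
      refine sum_congr rfl fun i₁ _ => ?_
      rw [aux_coeff, aux_coeff]; ring
    rw [hcoeff, aux_key k x y (i : ℕ) (by omega), finset_sum_coeff]
    have hterm : ∀ m ∈ range ((i:ℕ)+1),
        (C (((i:ℕ).choose m : ℂ) * (x-y)^m) * ((1 + C y * X)^(2*k - m) * X^m)).coeff (j:ℕ)
        = ((i:ℕ).choose m : ℂ) *
            (if m ≤ (j:ℕ) then
              (x - y)^m * ((2*k - m).choose ((j:ℕ) - m) : ℂ) * y^((j:ℕ) - m) else 0) := by
      intro m _
      rw [coeff_C_mul, coeff_mul_X_pow', mul_assoc]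
      congr 1
      split_ifs with h
      · rw [aux_coeff]; ring
      · ring
    rw [sum_congr rfl hterm, Matrix.mul_apply]
    have hconv : (∑ m : Fin k, A i m * B m j) =
        ∑ m ∈ range k, ((i:ℕ).choose m : ℂ) *
          (if m ≤ (j:ℕ) then
            (x - y)^m * ((2*k - m).choose ((j:ℕ) - m) : ℂ) * y^((j:ℕ) - m) else 0) := by
      rw [← Fin.sum_univ_eq_sum_range]
    rw [hconv]
    refine Finset.sum_subset (by intro m hm; simp only [mem_range] at *; omega) ?_
    intro m _ hm
    simp only [mem_range, not_lt] at hm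
    rw [Nat.choose_eq_zero_of_lt (by omega), Nat.cast_zero, zero_mul]
  rw [Matrix.isUnit_iff_isUnit_det, hfact, Matrix.det_mul]
  have hdA : A.det = 1 := by
    rw [Matrix.det_of_lowerTriangular A (fun i j hij => ?_)]
    · simp [hA]
    · have : (i : ℕ) < (j : ℕ) := hij
      simp only [hA]
      rw [Nat.choose_eq_zero_of_lt this, Nat.cast_zero]
  have hdB : B.det = ∏ m : Fin k, (x - y)^(m : ℕ) := by
    rw [Matrix.det_of_upperTriangular (fun i j hij => ?_)]
    · refine Finset.prod_congr rfl fun m _ => ?_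
      simp [hB]
    · have : (j : ℕ) < (i : ℕ) := hij
      simp only [hB, if_neg (by omega : ¬ (i:ℕ) ≤ (j:ℕ))]
  rw [hdA, hdB, one_mul, isUnit_iff_ne_zero]
  exact Finset.prod_ne_zero_iff.mpr fun m _ => pow_ne_zero _ (sub_ne_zero_of_ne hxy)
end
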